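/- Let n be a nonnegative integer. If ν_p(3n+1) is even for every prime p ≡ 2 (mod 3), then the number of 3-core partitions of n equals the product of (ν_p(3n+1)+1) over all primes p ≡ 1 (mod 3) dividing 3n+1; otherwise this number is 0. That is, |C_n| = ∏_{p prime, p ≡ 1 (mod 3)} (ν_p(3n+1)+1) if ν_p(3n+1) is even for all primes p ≡ 2 (mod 3), and |C_n| = 0 otherwise. -/

import Mathlib

/-!
With `ω² + ω + 1 = 0`, the norm of `a + bω` is `a² - ab + b²`, and `(x, y) ↦ 3(x + y) + 1 + 3xω`
identifies `C n` with the Eisenstein integers of norm `3n + 1` that are `≡ 1 (mod 3)`. The six unit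
multiples of an element of norm `N ≡ 1 (mod 3)` fall into six different residue classes, exactly
one of which is `1`, so `a₃(n)` is a sixth of the number `r(3n + 1)` of Eisenstein integers of
norm `3n + 1`.

Since `ℤ[ω]` is Euclidean, `r` can be computed one prime `p ∣ N` at a time, writing `N = p^k M`
with `p ∤ M`. A prime `p ≡ 2 (mod 3)` stays prime in `ℤ[ω]`, hence divides every element of norm
divisible by `p`; so `r(p^k M)` is `r(M)` for even `k` and `0` for odd `k`. A prime `p ≡ 1 (mod 3)`
splits as `π π̄` with `π ∤ π̄`, and the elements of norm `p^k M` are exactly the products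
`π^j π̄^(k-j) w` with `w` of norm `M`, uniquely; so `r(p^k M) = (k + 1) r(M)`.
-/

/-- `C n` is the set of characteristic vectors of 3-core partitions of `n`;
its cardinality `a₃(n)` is the number of 3-core partitions of `n`. -/
def C (n : ℤ) : Set (ℤ × ℤ) :=
  {p | 3 * p.1 ^ 2 + 3 * p.1 * p.2 + 3 * p.2 ^ 2 + p.1 + 2 * p.2 = n}

lemma Prime.eq_of_pow_mul_eq_pow_mul {α : Type*} [CommMonoidWithZero α] [IsCancelMulZero α]
    {π a b : α} (hπ : Prime π) (ha : ¬π ∣ a) (hb : ¬π ∣ b) {i j : ℕ}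
    (h : π ^ i * a = π ^ j * b) : i = j := by
  have key {i j : ℕ} {a b : α} (ha : ¬π ∣ a) (h : π ^ i * a = π ^ j * b) (hij : i < j) : False :=
    ha <| (mul_dvd_mul_iff_left (pow_ne_zero i hπ.ne_zero)).mp <| by
      rw [← pow_succ, h]
      exact (pow_dvd_pow π hij).mul_right b
  rcases lt_trichotomy i j with hij | rfl | hij
  · exact (key ha h hij).elim
  · rfl
  · exact (key hb h.symm hij).elim

/-- `⟨a, b⟩` stands for `a + b ω`, where `ω ^ 2 + ω + 1 = 0`. -/
@[ext] structure EisensteinInt where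
  re : ℤ
  im : ℤ
deriving DecidableEq

namespace EisensteinInt

instance : Zero EisensteinInt := ⟨⟨0, 0⟩⟩
instance : One EisensteinInt := ⟨⟨1, 0⟩⟩
instance : Add EisensteinInt := ⟨fun z w => ⟨z.re + w.re, z.im + w.im⟩⟩
instance : Neg EisensteinInt := ⟨fun z => ⟨-z.re, -z.im⟩⟩
instance : Mul EisensteinInt :=
  ⟨fun z w => ⟨z.re * w.re - z.im * w.im, z.re * w.im + z.im * w.re - z.im * w.im⟩⟩

@[simp] lemma zero_re : (0 : EisensteinInt).re = 0 := rfl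
@[simp] lemma zero_im : (0 : EisensteinInt).im = 0 := rfl
@[simp] lemma one_re : (1 : EisensteinInt).re = 1 := rfl
@[simp] lemma one_im : (1 : EisensteinInt).im = 0 := rfl
@[simp] lemma add_re (z w : EisensteinInt) : (z + w).re = z.re + w.re := rfl
@[simp] lemma add_im (z w : EisensteinInt) : (z + w).im = z.im + w.im := rfl
@[simp] lemma neg_re (z : EisensteinInt) : (-z).re = -z.re := rfl
@[simp] lemma neg_im (z : EisensteinInt) : (-z).im = -z.im := rfl
@[simp] lemma mul_re (z w : EisensteinInt) : (z * w).re = z.re * w.re - z.im * w.im := rfl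
@[simp] lemma mul_im (z w : EisensteinInt) :
    (z * w).im = z.re * w.im + z.im * w.re - z.im * w.im := rfl

instance : CommRing EisensteinInt where
  add_assoc _ _ _ := by ext <;> simp [add_assoc]
  zero_add _ := by ext <;> simp
  add_zero _ := by ext <;> simp
  add_comm _ _ := by ext <;> simp [add_comm]
  neg_add_cancel _ := by ext <;> simp
  mul_assoc _ _ _ := by ext <;> simp <;> ring
  one_mul _ := by ext <;> simp
  mul_one _ := by ext <;> simp
  left_distrib _ _ _ := by ext <;> simp <;> ring
  right_distrib _ _ _ := by ext <;> simp <;> ring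
  zero_mul _ := by ext <;> simp
  mul_zero _ := by ext <;> simp
  mul_comm _ _ := by ext <;> simp <;> ring
  nsmul := nsmulRec
  zsmul := zsmulRec

@[simp] lemma sub_re (z w : EisensteinInt) : (z - w).re = z.re - w.re := by
  simp [sub_eq_add_neg]
@[simp] lemma sub_im (z w : EisensteinInt) : (z - w).im = z.im - w.im := by
  simp [sub_eq_add_neg]
@[simp] lemma natCast_re (n : ℕ) : (n : EisensteinInt).re = n := by
  induction n <;> simp [*]
@[simp] lemma natCast_im (n : ℕ) : (n : EisensteinInt).im = 0 := by
  induction n <;> simp [*]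

instance : CharZero EisensteinInt := ⟨fun m n h => by simpa using congrArg re h⟩

@[simp] lemma intCast_re (n : ℤ) : (n : EisensteinInt).re = n := by
  cases n <;> simp [Int.negSucc_eq]
@[simp] lemma intCast_im (n : ℤ) : (n : EisensteinInt).im = 0 := by
  cases n <;> simp

lemma intCast_dvd_iff {n : ℤ} {z : EisensteinInt} :
    (n : EisensteinInt) ∣ z ↔ n ∣ z.re ∧ n ∣ z.im := by
  constructor
  · rintro ⟨t, rfl⟩
    exact ⟨⟨t.re, by simp⟩, ⟨t.im, by simp⟩⟩
  · rintro ⟨⟨a, ha⟩, ⟨b, hb⟩⟩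
    exact ⟨⟨a, b⟩, by ext <;> simp [ha, hb]⟩

def norm (z : EisensteinInt) : ℤ := z.re * z.re - z.re * z.im + z.im * z.im

def conj (z : EisensteinInt) : EisensteinInt := ⟨z.re - z.im, -z.im⟩

@[simp] lemma conj_re (z : EisensteinInt) : (conj z).re = z.re - z.im := rfl
@[simp] lemma conj_im (z : EisensteinInt) : (conj z).im = -z.im := rfl

@[simp] lemma conj_conj (z : EisensteinInt) : conj (conj z) = z := by ext <;> simp

lemma conj_mul (z w : EisensteinInt) : conj (z * w) = conj z * conj w := by
  ext <;> simp <;> ring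

@[simp] lemma conj_natCast (n : ℕ) : conj (n : EisensteinInt) = n := by ext <;> simp

@[simp] lemma conj_zero : conj 0 = 0 := by ext <;> simp

@[simp] lemma conj_eq_zero {z : EisensteinInt} : conj z = 0 ↔ z = 0 :=
  ⟨fun h => by simpa using congrArg conj h, fun h => by simp [h]⟩

lemma conj_dvd_conj {z w : EisensteinInt} (h : z ∣ w) : conj z ∣ conj w := by
  obtain ⟨t, rfl⟩ := h
  exact ⟨conj t, conj_mul z t⟩

lemma mul_conj (z : EisensteinInt) : z * conj z = (z.norm : EisensteinInt) := by
  ext <;> simp [norm] <;> ring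

@[simp] lemma norm_mul (z w : EisensteinInt) : (z * w).norm = z.norm * w.norm := by
  simp [norm]; ring

@[simp] lemma norm_conj (z : EisensteinInt) : (conj z).norm = z.norm := by simp [norm]; ring

@[simp] lemma norm_zero : (0 : EisensteinInt).norm = 0 := rfl
@[simp] lemma norm_one : (1 : EisensteinInt).norm = 1 := rfl
@[simp] lemma norm_intCast (n : ℤ) : (n : EisensteinInt).norm = n ^ 2 := by simp [norm, sq]

@[simp] lemma norm_natCast (n : ℕ) : (n : EisensteinInt).norm = (n : ℤ) ^ 2 := by
  simpa using norm_intCast n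

@[simp] lemma norm_pow (z : EisensteinInt) (n : ℕ) : (z ^ n).norm = z.norm ^ n :=
  map_pow (⟨⟨norm, norm_one⟩, norm_mul⟩ : EisensteinInt →* ℤ) z n

lemma four_mul_norm (z : EisensteinInt) : 4 * z.norm = (2 * z.re - z.im) ^ 2 + 3 * z.im ^ 2 := by
  simp only [norm]; ring

lemma norm_nonneg (z : EisensteinInt) : 0 ≤ z.norm := by
  nlinarith [four_mul_norm z, sq_nonneg (2 * z.re - z.im), sq_nonneg z.im]

@[simp] lemma norm_eq_zero {z : EisensteinInt} : z.norm = 0 ↔ z = 0 := by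
  refine ⟨fun h => ?_, fun h => h ▸ norm_zero⟩
  have him : z.im = 0 := by nlinarith [four_mul_norm z, sq_nonneg (2 * z.re - z.im), sq_nonneg z.im]
  have hre : z.re = 0 := by simpa [norm, him] using h
  ext <;> simp [him, hre]

lemma norm_pos {z : EisensteinInt} (hz : z ≠ 0) : 0 < z.norm :=
  (norm_nonneg z).lt_of_ne (Ne.symm (mt norm_eq_zero.mp hz))

lemma norm_dvd_norm {z w : EisensteinInt} (h : z ∣ w) : z.norm ∣ w.norm := by
  obtain ⟨t, rfl⟩ := h
  exact ⟨t.norm, norm_mul z t⟩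

instance : Nontrivial EisensteinInt := ⟨⟨0, 1, by decide⟩⟩

lemma two_mul_abs_sub_mul_round_le (a : ℤ) {d : ℤ} (hd : 0 < d) :
    2 * |a - d * ((2 * a + d) / (2 * d))| ≤ d := by
  have h := Int.emod_add_mul_ediv (2 * a + d) (2 * d)
  have h0 := Int.emod_nonneg (2 * a + d) (show 2 * d ≠ 0 by omega)
  have h1 := Int.emod_lt_of_pos (2 * a + d) (show 0 < 2 * d by omega)
  rcases abs_cases (a - d * ((2 * a + d) / (2 * d))) with ⟨_, _⟩ | ⟨_, _⟩ <;> nlinarith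

/-- Division with the coordinates of `z * conj w / N(w)` rounded to the nearest integers. -/
def quot (z w : EisensteinInt) : EisensteinInt :=
  ⟨(2 * (z * conj w).re + w.norm) / (2 * w.norm), (2 * (z * conj w).im + w.norm) / (2 * w.norm)⟩

def rem (z w : EisensteinInt) : EisensteinInt := z - w * quot z w

lemma norm_rem_lt (z : EisensteinInt) {w : EisensteinInt} (hw : w ≠ 0) :
    (rem z w).norm < w.norm := by
  have hd := norm_pos hw
  set c := z * conj w
  set x := c.re - w.norm * (quot z w).re
  set y := c.im - w.norm * (quot z w).im
  have hx : 2 * |x| ≤ w.norm := two_mul_abs_sub_mul_round_le c.re hd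
  have hy : 2 * |y| ≤ w.norm := two_mul_abs_sub_mul_round_le c.im hd
  have hxy : rem z w * conj w = ⟨x, y⟩ := by
    have : rem z w * conj w = c - (w.norm : EisensteinInt) * quot z w := by
      rw [rem, ← mul_conj w]; ring
    rw [this]; ext <;> simp [x, y]
  have hnorm : (rem z w).norm * w.norm = x * x - x * y + y * y := by
    rw [← norm_conj w, ← norm_mul, hxy]; rfl
  -- `N(⟨x, y⟩) ≤ 3/4 N(w)²` since `|x|, |y| ≤ N(w)/2`
  have h4 : 4 * (x * x - x * y + y * y) ≤ 3 * (w.norm * w.norm) := by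
    rcases abs_cases x with ⟨_, _⟩ | ⟨_, _⟩ <;> rcases abs_cases y with ⟨_, _⟩ | ⟨_, _⟩ <;>
      nlinarith
  nlinarith

instance : EuclideanDomain EisensteinInt where
  quotient := quot
  remainder := rem
  quotient_zero z := by ext <;> simp [quot]
  quotient_mul_add_remainder_eq z w := by simp [rem]
  r z w := z.norm.natAbs < w.norm.natAbs
  r_wellFounded := (measure (Int.natAbs ∘ norm)).wf
  remainder_lt z w hw :=
    Int.natAbs_lt_natAbs_of_nonneg_of_lt (norm_nonneg _) (norm_rem_lt z hw)
  mul_left_not_lt z w hw := by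
    rw [not_lt, norm_mul, Int.natAbs_mul]
    exact Nat.le_mul_of_pos_right _ (Int.natAbs_pos.mpr (mt norm_eq_zero.mp hw))

lemma isUnit_iff_norm_eq_one {z : EisensteinInt} : IsUnit z ↔ z.norm = 1 := by
  refine ⟨fun ⟨u, hu⟩ => ?_, fun h => isUnit_iff_exists_inv.mpr ⟨conj z, by simp [mul_conj, h]⟩⟩
  have h : (u : EisensteinInt).norm * (↑u⁻¹ : EisensteinInt).norm = 1 := by simp [← norm_mul]
  exact hu ▸ Int.eq_one_of_mul_eq_one_right (norm_nonneg _) h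

/-- The six units `±1, ±ω, ±ω²`. -/
def unit : Fin 6 → EisensteinInt := ![1, -1, ⟨0, 1⟩, ⟨0, -1⟩, ⟨-1, -1⟩, ⟨1, 1⟩]

lemma norm_unit (i : Fin 6) : (unit i).norm = 1 := by fin_cases i <;> rfl

lemma unit_ne_zero (i : Fin 6) : unit i ≠ 0 := fun h => by simpa [h] using norm_unit i

lemma unit_injective : Function.Injective unit := by decide

lemma exists_unit_mul_unit_eq_one (i : Fin 6) : ∃ j, unit j * unit i = 1 := by
  revert i; decide

lemma exists_unit_eq_of_norm_eq_one {z : EisensteinInt} (h : z.norm = 1) : ∃ i, unit i = z := by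
  obtain ⟨a, b⟩ := z
  have h4 := four_mul_norm ⟨a, b⟩
  simp only [h] at h4
  obtain ⟨hb₁, hb₂⟩ : -1 ≤ b ∧ b ≤ 1 := by constructor <;> nlinarith [sq_nonneg (2 * a - b)]
  obtain ⟨ha₁, ha₂⟩ : -1 ≤ a ∧ a ≤ 1 := by constructor <;> nlinarith [sq_nonneg (2 * a - b)]
  interval_cases a <;> interval_cases b <;> first | decide | (exfalso; norm_num [norm] at h)

def residue (z : EisensteinInt) : ZMod 3 × ZMod 3 := (z.re, z.im)

/-- Multiplication in `ℤ[ω] / 3`, in coordinates. -/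
def residueMul (a b : ZMod 3 × ZMod 3) : ZMod 3 × ZMod 3 :=
  (a.1 * b.1 - a.2 * b.2, a.1 * b.2 + a.2 * b.1 - a.2 * b.2)

lemma residue_mul (z w : EisensteinInt) : residue (z * w) = residueMul (residue z) (residue w) := by
  simp only [residue, residueMul, mul_re, mul_im, Int.cast_sub, Int.cast_add, Int.cast_mul]

lemma intCast_norm_eq_sq (z : EisensteinInt) :
    (z.norm : ZMod 3) = ((residue z).1 + (residue z).2) ^ 2 := by
  have h3 : (3 : ZMod 3) = 0 := rfl
  simp only [norm, residue]
  push_cast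
  linear_combination (-(z.re : ZMod 3) * (z.im : ZMod 3)) * h3

lemma residue_unit_injective : Function.Injective (residue ∘ unit) := by decide

lemma exists_residueMul_unit_eq_one :
    ∀ w : ZMod 3 × ZMod 3, (w.1 + w.2) ^ 2 = 1 → ∃ i, residueMul (residue (unit i)) w = (1, 0) := by
  decide

lemma prime_of_prime_norm {π : EisensteinInt} (hπ : Prime π.norm) : Prime π := by
  rw [← irreducible_iff_prime, irreducible_iff]
  refine ⟨fun h => hπ.not_isUnit (by simp [isUnit_iff_norm_eq_one.mp h]), fun a b hab => ?_⟩
  have h := (hπ.irreducible.isUnit_or_isUnit (norm_mul a b ▸ congrArg norm hab))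
  simp only [Int.isUnit_iff, isUnit_iff_norm_eq_one] at h ⊢
  have := norm_nonneg a
  have := norm_nonneg b
  omega

lemma prime_of_norm_eq {p : ℕ} (hp : p.Prime) {π : EisensteinInt} (hπ : π.norm = p) : Prime π :=
  prime_of_prime_norm (hπ ▸ Nat.prime_iff_prime_int.mp hp)

lemma not_isUnit_natCast {p : ℕ} (hp : p.Prime) : ¬IsUnit (p : EisensteinInt) := by
  rw [isUnit_iff_norm_eq_one, norm_natCast]
  exact_mod_cast (Nat.pow_left_injective two_ne_zero).ne hp.one_lt.ne'

lemma norm_eq_of_natCast_eq_mul {p : ℕ} (hp : p.Prime) {a b : EisensteinInt}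
    (hab : (p : EisensteinInt) = a * b) (ha : ¬IsUnit a) (hb : ¬IsUnit b) : a.norm = p := by
  obtain ⟨m, hm⟩ := Int.eq_ofNat_of_zero_le (norm_nonneg a)
  obtain ⟨k, hk⟩ := Int.eq_ofNat_of_zero_le (norm_nonneg b)
  rw [isUnit_iff_norm_eq_one, hm] at ha
  rw [isUnit_iff_norm_eq_one, hk] at hb
  have hmk : m * k = p ^ 2 := by
    have := congrArg norm hab
    rw [norm_mul, norm_natCast, hm, hk] at this
    exact_mod_cast this.symm
  rw [hm, ((hp.mul_eq_prime_sq_iff (by exact_mod_cast ha) (by exact_mod_cast hb)).mp hmk).1]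

lemma prime_natCast_of_mod_three_eq_two {p : ℕ} (hp : p.Prime) (hp3 : p % 3 = 2) :
    Prime (p : EisensteinInt) := by
  rw [← irreducible_iff_prime, irreducible_iff]
  refine ⟨not_isUnit_natCast hp, fun a b hab => ?_⟩
  by_contra! h
  have hsq := intCast_norm_eq_sq a
  rw [norm_eq_of_natCast_eq_mul hp hab h.1 h.2, Int.cast_natCast, ← ZMod.natCast_mod, hp3] at hsq
  -- `2` is not a square modulo `3`
  revert hsq
  generalize (residue a).1 + (residue a).2 = t
  revert t
  decide

end EisensteinInt

lemma Nat.Prime.exists_dvd_sq_add_add_one {p : ℕ} (hp : p.Prime) (hp3 : p % 3 = 1) :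
    ∃ m : ℕ, p ∣ m ^ 2 + m + 1 := by
  have : Fact p.Prime := ⟨hp⟩
  obtain ⟨g, hg⟩ := exists_prime_orderOf_dvd_card 3
    (by rw [ZMod.card_units_eq_totient, Nat.totient_prime hp]; omega : 3 ∣ Fintype.card (ZMod p)ˣ)
  have h3 : (g : ZMod p) ^ 3 = 1 := by
    rw [← Units.val_pow_eq_pow_val, ← hg, pow_orderOf_eq_one, Units.val_one]
  have h1 : (g : ZMod p) ≠ 1 := fun h => by
    rw [Units.val_eq_one.mp h, orderOf_one] at hg; omega
  have hg0 : ((g : ZMod p) - 1) * ((g : ZMod p) ^ 2 + g + 1) = 0 := by linear_combination h3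
  refine ⟨(g : ZMod p).val, (ZMod.natCast_eq_zero_iff _ _).mp ?_⟩
  simpa using (_root_.mul_eq_zero.mp hg0).resolve_left (sub_ne_zero.mpr h1)

namespace EisensteinInt

lemma exists_norm_eq_of_mod_three_eq_one {p : ℕ} (hp : p.Prime) (hp3 : p % 3 = 1) :
    ∃ π : EisensteinInt, π.norm = p := by
  obtain ⟨m, hpm⟩ := hp.exists_dvd_sq_add_add_one hp3
  -- `m² + m + 1 = (m - ω)(m - ω²)`
  have hfactor : ((m ^ 2 + m + 1 : ℕ) : EisensteinInt) = ⟨m, -1⟩ * ⟨m + 1, 1⟩ := by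
    ext <;> simp [sq]
    ring
  have hnot : ¬Prime (p : EisensteinInt) := fun hprime => by
    have hdvd := hfactor ▸ Nat.cast_dvd_cast (α := EisensteinInt) hpm
    have hp1 := hp.one_lt
    rcases hprime.dvd_or_dvd hdvd with h | h <;>
      · rw [← Int.cast_natCast, intCast_dvd_iff] at h
        have := Int.le_of_dvd one_pos (by simpa using h.2)
        omega
  obtain ⟨a, b, hab, ha, hb⟩ : ∃ a b, (p : EisensteinInt) = a * b ∧ ¬IsUnit a ∧ ¬IsUnit b := by
    simpa [irreducible_iff, not_isUnit_natCast hp, not_or] using mt irreducible_iff_prime.mp hnot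
  exact ⟨a, norm_eq_of_natCast_eq_mul hp hab ha hb⟩

lemma not_dvd_conj {p : ℕ} (hp : p.Prime) (hp3 : p % 3 = 1) {π : EisensteinInt}
    (hπ : π.norm = p) : ¬π ∣ conj π := by
  intro h
  have hpZ := Nat.prime_iff_prime_int.mp hp
  have hsum : π + conj π = ((2 * π.re - π.im : ℤ) : EisensteinInt) := by
    ext <;> simp only [add_re, add_im, conj_re, conj_im, intCast_re, intCast_im] <;> ring
  have hre : (p : ℤ) ∣ 2 * π.re - π.im := by
    have := norm_dvd_norm (hsum ▸ dvd_add dvd_rfl h)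
    rw [hπ, norm_intCast] at this
    exact hpZ.dvd_of_dvd_pow this
  have him : (p : ℤ) ∣ π.im := by
    have h4 := four_mul_norm π
    rw [hπ] at h4
    have : (p : ℤ) ∣ 3 * π.im ^ 2 := by
      rw [show 3 * π.im ^ 2 = 4 * p - (2 * π.re - π.im) ^ 2 by linarith]
      exact dvd_sub (dvd_mul_left _ _) (dvd_pow hre two_ne_zero)
    rcases hpZ.dvd_or_dvd this with h3 | h3
    · have := Int.le_of_dvd (by norm_num) h3; have := hp.two_le; omega
    · exact hpZ.dvd_of_dvd_pow h3
  -- then `p² ∣ 4 N(π) = 4p`, so `p ∣ 4`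
  obtain ⟨s, hs⟩ := hre
  obtain ⟨t, ht⟩ := him
  have h4 := four_mul_norm π
  rw [hπ, hs, ht] at h4
  have h4' : (p : ℤ) * 4 = p * (p * (s ^ 2 + 3 * t ^ 2)) := by linear_combination h4
  have hdvd : (p : ℤ) ∣ 2 ^ 2 := ⟨_, mul_left_cancel₀ (by exact_mod_cast hp.ne_zero) h4'⟩
  replace hdvd : p ∣ 2 ^ 2 := by exact_mod_cast hdvd
  have := (Nat.prime_dvd_prime_iff_eq hp Nat.prime_two).mp (hp.dvd_of_dvd_pow hdvd)
  omega

def withNorm (N : ℤ) : Set EisensteinInt := {z | z.norm = N}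

@[simp] lemma mem_withNorm {N : ℤ} {z : EisensteinInt} : z ∈ withNorm N ↔ z.norm = N := Iff.rfl

lemma card_withNorm_one : Nat.card (withNorm 1) = 6 := by
  have : withNorm 1 = Set.range unit :=
    Set.ext fun z => ⟨exists_unit_eq_of_norm_eq_one, fun ⟨i, hi⟩ => hi ▸ norm_unit i⟩
  rw [this, Nat.card_range_of_injective unit_injective, Nat.card_fin]

/-- Every element of norm `N ≡ 1 (mod 3)` is a unit times an element `≡ 1 (mod 3)`, uniquely. -/
lemma card_withNorm_eq_six_mul {N : ℤ} (hN : (N : ZMod 3) = 1) :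
    Nat.card (withNorm N) = 6 * Nat.card {z ∈ withNorm N | residue z = (1, 0)} := by
  have hmem (i : Fin 6) {z : EisensteinInt} (hz : z ∈ withNorm N) : unit i * z ∈ withNorm N := by
    simpa [norm_unit] using hz
  let f : Fin 6 × {z ∈ withNorm N | residue z = (1, 0)} → withNorm N :=
    fun x => ⟨unit x.1 * x.2, hmem x.1 x.2.2.1⟩
  have hf : Function.Bijective f := by
    constructor
    · rintro ⟨i, z, hz, hzr⟩ ⟨j, w, hw, hwr⟩ h
      have h : unit i * z = unit j * w := congrArg Subtype.val h
      have hij : i = j := residue_unit_injective <| by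
        simpa [residue_mul, hzr, hwr, residueMul] using congrArg residue h
      subst hij
      simp [mul_left_cancel₀ (unit_ne_zero i) h]
    · rintro ⟨z, hz⟩
      have hsq : ((residue z).1 + (residue z).2) ^ 2 = 1 := by
        rw [← intCast_norm_eq_sq, mem_withNorm.mp hz, hN]
      obtain ⟨i, hi⟩ := exists_residueMul_unit_eq_one _ hsq
      obtain ⟨j, hj⟩ := exists_unit_mul_unit_eq_one i
      refine ⟨⟨j, unit i * z, hmem i hz, by rw [residue_mul, hi]⟩, ?_⟩
      simp [f, ← mul_assoc, hj]
  rw [← Nat.card_congr (Equiv.ofBijective f hf), Nat.card_prod, Nat.card_fin]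

lemma natCast_dvd_of_dvd_norm {p : ℕ} (hp : Prime (p : EisensteinInt)) {z : EisensteinInt}
    (h : (p : ℤ) ∣ z.norm) : (p : EisensteinInt) ∣ z := by
  have : (p : EisensteinInt) ∣ z * conj z := by
    simpa [mul_conj] using Int.cast_dvd_cast (α := EisensteinInt) _ _ h
  rcases hp.dvd_or_dvd this with h | h
  · exact h
  · simpa using conj_dvd_conj h

section Inert

variable {p : ℕ}

lemma withNorm_eq_empty_of_prime (hp : Prime (p : EisensteinInt)) {N : ℤ} (hpN : (p : ℤ) ∣ N)
    (hpN2 : ¬(p : ℤ) ^ 2 ∣ N) : withNorm N = ∅ := by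
  refine Set.eq_empty_of_forall_notMem fun z hz => hpN2 ?_
  obtain ⟨t, rfl⟩ := natCast_dvd_of_dvd_norm hp (mem_withNorm.mp hz ▸ hpN)
  exact ⟨t.norm, by simp [← mem_withNorm.mp hz]⟩

lemma withNorm_sq_mul_eq_image_of_prime (hp : Prime (p : EisensteinInt)) (M : ℤ) :
    withNorm (p ^ 2 * M) = ((p : EisensteinInt) * ·) '' withNorm M := by
  ext z
  constructor
  · intro hz
    obtain ⟨t, rfl⟩ := natCast_dvd_of_dvd_norm hp
      (mem_withNorm.mp hz ▸ dvd_mul_of_dvd_left (dvd_pow_self _ two_ne_zero) M)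
    refine ⟨t, ?_, rfl⟩
    have hp0 : (p : ℤ) ^ 2 ≠ 0 := pow_ne_zero 2 (by exact_mod_cast hp.ne_zero)
    simpa [hp0] using hz
  · rintro ⟨t, ht, rfl⟩
    simp_all

lemma card_withNorm_pow_mul_of_prime (hp : Prime (p : EisensteinInt)) {M : ℤ}
    (hM : ¬(p : ℤ) ∣ M) (k : ℕ) :
    Nat.card (withNorm (p ^ k * M)) = if Even k then Nat.card (withNorm M) else 0 := by
  induction k using Nat.twoStepInduction with
  | zero => simp
  | one =>
    have hp0 : (p : ℤ) ≠ 0 := by exact_mod_cast hp.ne_zero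
    rw [withNorm_eq_empty_of_prime hp (by simp) (by rwa [sq, pow_one, mul_dvd_mul_iff_left hp0])]
    simp
  | more k ih _ =>
    rw [pow_add, mul_comm (_ ^ k), mul_assoc, withNorm_sq_mul_eq_image_of_prime hp,
      Nat.card_image_of_injective (mul_right_injective₀ hp.ne_zero), ih]
    simp [Nat.even_add]

end Inert

section Split

variable {p : ℕ} {π : EisensteinInt}

lemma dvd_or_conj_dvd_of_dvd_norm (hp : p.Prime) (hπ : π.norm = p) {z : EisensteinInt}
    (h : (p : ℤ) ∣ z.norm) : π ∣ z ∨ conj π ∣ z := by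
  have hπp : π ∣ z * conj z := by
    refine (Dvd.intro _ (mul_conj π)).trans ?_
    simpa [hπ, mul_conj] using Int.cast_dvd_cast (α := EisensteinInt) _ _ h
  refine (prime_of_norm_eq hp hπ).dvd_or_dvd hπp |>.imp id fun h => ?_
  simpa using conj_dvd_conj h

lemma exists_pow_mul_conj_pow_mul_eq (hp : p.Prime) (hπ : π.norm = p) {M : ℤ} (k : ℕ)
    {z : EisensteinInt} (hz : z.norm = p ^ k * M) :
    ∃ j ≤ k, ∃ w : EisensteinInt, w.norm = M ∧ π ^ j * conj π ^ (k - j) * w = z := by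
  induction k generalizing z with
  | zero => exact ⟨0, le_rfl, z, by simpa using hz, by simp⟩
  | succ k ih =>
    have hp0 : (p : ℤ) ≠ 0 := by exact_mod_cast hp.ne_zero
    have hdvd : (p : ℤ) ∣ z.norm := by
      rw [hz, pow_succ]; exact dvd_mul_of_dvd_left (dvd_mul_left _ _) _
    rcases dvd_or_conj_dvd_of_dvd_norm hp hπ hdvd with ⟨t, rfl⟩ | ⟨t, rfl⟩
    · obtain ⟨j, hj, w, hw, rfl⟩ := ih (z := t) (by
        rw [norm_mul, hπ, pow_succ] at hz
        exact mul_left_cancel₀ hp0 (by linear_combination hz))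
      exact ⟨j + 1, by omega, w, hw, by rw [Nat.add_sub_add_right]; ring⟩
    · obtain ⟨j, hj, w, hw, rfl⟩ := ih (z := t) (by
        rw [norm_mul, norm_conj, hπ, pow_succ] at hz
        exact mul_left_cancel₀ hp0 (by linear_combination hz))
      exact ⟨j, by omega, w, hw, by rw [Nat.sub_add_comm hj]; ring⟩

lemma card_withNorm_pow_mul_of_split (hp : p.Prime) (hp3 : p % 3 = 1) {M : ℤ}
    (hM : ¬(p : ℤ) ∣ M) (k : ℕ) :
    Nat.card (withNorm (p ^ k * M)) = (k + 1) * Nat.card (withNorm M) := by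
  obtain ⟨π, hπ⟩ := exists_norm_eq_of_mod_three_eq_one hp hp3
  have hπ' := prime_of_norm_eq hp hπ
  have hπw {i : ℕ} {w : EisensteinInt} (hw : w ∈ withNorm M) : ¬π ∣ conj π ^ i * w := fun h =>
    (hπ'.dvd_or_dvd h).elim (fun h => not_dvd_conj hp hp3 hπ (hπ'.dvd_of_dvd_pow h))
      fun h => hM (hπ ▸ mem_withNorm.mp hw ▸ norm_dvd_norm h)
  have hmem (j : Fin (k + 1)) {w : EisensteinInt} (hw : w ∈ withNorm M) :
      π ^ (j : ℕ) * conj π ^ (k - j) * w ∈ withNorm (p ^ k * M) := by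
    simp only [mem_withNorm, norm_mul, norm_pow, norm_conj, hπ, mem_withNorm.mp hw, ← pow_add,
      Nat.add_sub_cancel' (Nat.lt_succ_iff.mp j.2)]
  let f : Fin (k + 1) × withNorm M → withNorm (p ^ k * M) :=
    fun x => ⟨π ^ (x.1 : ℕ) * conj π ^ (k - x.1) * x.2, hmem x.1 x.2.2⟩
  have hf : Function.Bijective f := by
    constructor
    · rintro ⟨i, w, hw⟩ ⟨j, w', hw'⟩ h
      have h : π ^ (i : ℕ) * (conj π ^ (k - i) * w) = π ^ (j : ℕ) * (conj π ^ (k - j) * w') := by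
        simpa only [f, mul_assoc] using congrArg Subtype.val h
      obtain rfl : i = j := Fin.ext (hπ'.eq_of_pow_mul_eq_pow_mul (hπw hw) (hπw hw') h)
      have hπ0 : π ^ (i : ℕ) * conj π ^ (k - i) ≠ 0 := by simp [hπ'.ne_zero]
      simp [mul_left_cancel₀ hπ0 (by simpa only [mul_assoc] using h)]
    · rintro ⟨z, hz⟩
      obtain ⟨j, hj, w, hw, rfl⟩ := exists_pow_mul_conj_pow_mul_eq hp hπ k hz
      exact ⟨⟨⟨j, by omega⟩, w, hw⟩, rfl⟩
  rw [← Nat.card_congr (Equiv.ofBijective f hf), Nat.card_prod, Nat.card_fin]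

end Split

/-- The factor that `p ^ k ∥ N` contributes to `Nat.card (withNorm N) / 6`. -/
def localFactor (p k : ℕ) : ℕ :=
  if p % 3 = 1 then k + 1 else if p % 3 = 2 then if Even k then 1 else 0 else 1

lemma card_withNorm_prime_pow_mul {p : ℕ} (hp : p.Prime) (hp3 : p ≠ 3) {M : ℤ}
    (hM : ¬(p : ℤ) ∣ M) (k : ℕ) :
    Nat.card (withNorm (p ^ k * M)) = localFactor p k * Nat.card (withNorm M) := by
  have : p % 3 ≠ 0 := fun h =>
    hp3 ((Nat.prime_dvd_prime_iff_eq Nat.prime_three hp).mp (Nat.dvd_of_mod_eq_zero h)).symm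
  rcases (by omega : p % 3 = 1 ∨ p % 3 = 2) with h | h
  · simp [localFactor, h, card_withNorm_pow_mul_of_split hp h hM]
  · rw [card_withNorm_pow_mul_of_prime (prime_natCast_of_mod_three_eq_two hp h) hM]
    split_ifs <;> simp_all [localFactor]

lemma factorization_prod_localFactor_prime_pow_mul {p a : ℕ} (hp : p.Prime) (ha : ¬p ∣ a)
    (k : ℕ) : (p ^ k * a).factorization.prod localFactor =
      localFactor p k * a.factorization.prod localFactor := by
  have hdisj : Disjoint (Finsupp.single p k).support a.factorization.support :=
    Finset.disjoint_left.mpr fun q hq hq' => by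
      rw [Finset.mem_singleton.mp (Finsupp.support_single_subset hq), Nat.support_factorization]
        at hq'
      exact ha (Nat.dvd_of_mem_primeFactors hq')
  rw [Nat.factorization_mul_of_coprime ((hp.coprime_iff_not_dvd.mpr ha).pow_left k),
    hp.factorization_pow, Finsupp.prod_add_index_of_disjoint hdisj,
    Finsupp.prod_single_index (by simp [localFactor])]

lemma card_withNorm_natCast (N : ℕ) (hN : ¬3 ∣ N) :
    Nat.card (withNorm N) = 6 * N.factorization.prod localFactor := by
  induction N using Nat.recOnPrimePow with
  | zero => simp at hN
  | one => rw [Nat.cast_one, card_withNorm_one]; simp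
  | prime_pow_mul a p k hp hpa hk ih =>
    have hp3 : p ≠ 3 := by
      rintro rfl
      exact hN (dvd_mul_of_dvd_left (dvd_pow_self 3 hk.ne') a)
    have hpa' : ¬(p : ℤ) ∣ a := by exact_mod_cast hpa
    push_cast
    rw [card_withNorm_prime_pow_mul hp hp3 hpa', ih fun h => hN (dvd_mul_of_dvd_right h _),
      factorization_prod_localFactor_prime_pow_mul hp hpa]
    ring

lemma factorization_prod_localFactor_of_forall {N : ℕ}
    (h : ∀ p : ℕ, p.Prime → p % 3 = 2 → Even (N.factorization p)) :
    N.factorization.prod localFactor =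
      ∏ p ∈ N.primeFactors.filter (fun p => p % 3 = 1), (N.factorization p + 1) := by
  rw [Finsupp.prod, Nat.support_factorization, Finset.prod_filter]
  refine Finset.prod_congr rfl fun p hp => ?_
  have := h p (Nat.prime_of_mem_primeFactors hp)
  unfold localFactor
  split_ifs <;> simp_all

lemma factorization_prod_localFactor_eq_zero {N : ℕ}
    (h : ¬∀ p : ℕ, p.Prime → p % 3 = 2 → Even (N.factorization p)) :
    N.factorization.prod localFactor = 0 := by
  push Not at h
  obtain ⟨p, -, hp3, hodd⟩ := h
  refine Finset.prod_eq_zero (i := p) (Finsupp.mem_support_iff.mpr fun h0 => hodd (by simp [h0])) ?_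
  simp [localFactor, hp3, hodd]

def ofCharVector (q : ℤ × ℤ) : EisensteinInt := ⟨3 * (q.1 + q.2) + 1, 3 * q.1⟩

lemma ofCharVector_injective : Function.Injective ofCharVector := by
  rintro ⟨x, y⟩ ⟨x', y'⟩ h
  simp only [ofCharVector, EisensteinInt.mk.injEq] at h
  ext <;> simp <;> omega

lemma image_ofCharVector_C (n : ℤ) : ofCharVector '' C n =
      {z ∈ withNorm (3 * n + 1) | residue z = (1, 0)} := by
  have h3 : (3 : ZMod 3) = 0 := rfl
  ext z
  constructor
  · rintro ⟨⟨x, y⟩, hq, rfl⟩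
    have hq : 3 * x ^ 2 + 3 * x * y + 3 * y ^ 2 + x + 2 * y = n := hq
    refine ⟨?_, by simp [ofCharVector, residue, h3]⟩
    simp only [mem_withNorm, norm, ofCharVector]
    linear_combination 3 * hq
  · rintro ⟨hz, hres⟩
    obtain ⟨u, hu⟩ : (3 : ℤ) ∣ z.re - 1 := (ZMod.intCast_zmod_eq_zero_iff_dvd _ 3).mp <| by
      simpa [residue, sub_eq_zero] using congrArg Prod.fst hres
    obtain ⟨x, hx⟩ : (3 : ℤ) ∣ z.im := (ZMod.intCast_zmod_eq_zero_iff_dvd _ 3).mp <| by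
      simpa [residue] using congrArg Prod.snd hres
    refine ⟨(x, u - x), ?_, by ext <;> simp [ofCharVector] <;> omega⟩
    have hz : z.norm = 3 * n + 1 := hz
    simp only [norm, hx, show z.re = 3 * u + 1 by omega] at hz
    show 3 * x ^ 2 + 3 * x * (u - x) + 3 * (u - x) ^ 2 + x + 2 * (u - x) = n
    exact mul_left_cancel₀ three_ne_zero (by linear_combination hz)

lemma ncard_C (n : ℕ) : (C n).ncard = (3 * n + 1).factorization.prod localFactor := by
  have h6 := card_withNorm_eq_six_mul (N := 3 * n + 1) (by simp [show (3 : ZMod 3) = 0 from rfl])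
  rw [← image_ofCharVector_C, Nat.card_image_of_injective ofCharVector_injective] at h6
  have hcount := card_withNorm_natCast (3 * n + 1) (by omega)
  push_cast at hcount
  rw [← Nat.card_coe_set_eq]
  omega

end EisensteinInt

theorem stmt10 (n : ℕ) :
    ((∀ p : ℕ, p.Prime → p % 3 = 2 → Even ((3 * n + 1).factorization p)) →
      (C (n : ℤ)).ncard =
        ∏ p ∈ (3 * n + 1).primeFactors.filter (fun p => p % 3 = 1),
          ((3 * n + 1).factorization p + 1)) ∧
    ((¬ ∀ p : ℕ, p.Prime → p % 3 = 2 → Even ((3 * n + 1).factorization p)) →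
      (C (n : ℤ)).ncard = 0) := by
  rw [EisensteinInt.ncard_C]
  exact ⟨EisensteinInt.factorization_prod_localFactor_of_forall,
    EisensteinInt.factorization_prod_localFactor_eq_zero⟩
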